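/- For every continuously differentiable function f with compact support in the cylinder C = {x ∈ ℝ³ : x₁² + x₂² < 1, |x₃| < 1}, writing |x'| = √(x₁² + x₂²), the weighted inequality ∫_C |f(x)|² / (|x'|² · ln²(e/|x'|)) dx ≤ 4 ∫_C |∇_{x'} f(x)|² dx holds, where ∇_{x'} f = (∂f/∂x₁, ∂f/∂x₂). -/

import Mathlib

/-!
Along each ray from the `x₃`-axis, `g(r) = f(r cos θ, r sin θ, x₃)` vanishes at `r = 1` and
satisfies the one-dimensional Hardy inequality `∫₀¹ g² / (r (1 - ln r)²) dr ≤ 4 ∫₀¹ r g'² dr`: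
the derivative of `g² / (1 - ln r)` is `2 g g' / (1 - ln r) + g² / (r (1 - ln r)²)`, its integral
over `[ε, 1]` is `-g(ε)² / (1 - ln ε) ≤ 0`, and completing a square gives
`2 g g' / (1 - ln r) ≥ -g² / (2 r (1 - ln r)²) - 2 r g'²`. Since `ln (e / r) = 1 - ln r` and
`|g'| ≤ |∇_{x'} f|`, integrating over `θ` in polar coordinates and then over `x₃` gives the
inequality.
-/

open MeasureTheory Real Set

def cylC : Set (Fin 3 → ℝ) := {x | (x 0)^2 + (x 1)^2 < 1 ∧ |x 2| < 1}

theorem one_le_one_sub_log {r : ℝ} (hr : r ∈ Ioc 0 1) : 1 ≤ 1 - log r := by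
  linarith [log_nonpos hr.1.le hr.2]

theorem continuousOn_sq_div_mul_one_sub_log_sq {g : ℝ → ℝ} {s : Set ℝ} (hg : ContinuousOn g s)
    (hs : s ⊆ Ioc 0 1) : ContinuousOn (fun r => g r ^ 2 / (r * (1 - log r) ^ 2)) s := by
  have hlog : ContinuousOn (fun r => 1 - log r) s :=
    continuousOn_const.sub (continuousOn_log.mono fun r hr => (hs hr).1.ne')
  refine (hg.pow 2).div (continuousOn_id.mul (hlog.pow 2)) fun r hr => ?_
  have := one_le_one_sub_log (hs hr)
  have := (hs hr).1
  positivity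

theorem integral_sq_div_mul_one_sub_log_sq_le {g G : ℝ → ℝ} {ε : ℝ} (hε : 0 < ε) (hε1 : ε ≤ 1)
    (hd : ∀ r ∈ Icc ε 1, HasDerivAt g (G r) r) (hG : ContinuousOn G (Icc ε 1)) (hg1 : g 1 = 0) :
    ∫ r in ε..1, g r ^ 2 / (r * (1 - log r) ^ 2) ≤ 4 * ∫ r in ε..1, r * G r ^ 2 := by
  have hIcc : Icc ε 1 ⊆ Ioc 0 1 := fun r hr => ⟨hε.trans_le hr.1, hr.2⟩
  have hpos : ∀ r ∈ Icc ε 1, 0 < r := fun r hr => (hIcc hr).1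
  have hw : ∀ r ∈ Icc ε 1, 0 < 1 - log r := fun r hr =>
    one_pos.trans_le (one_le_one_sub_log (hIcc hr))
  have hg : ContinuousOn g (Icc ε 1) := fun r hr => (hd r hr).continuousAt.continuousWithinAt
  set u := fun r => g r ^ 2 / (r * (1 - log r) ^ 2)
  set q := fun r => 2 * g r * G r / (1 - log r)
  have hu : ContinuousOn u (Icc ε 1) := continuousOn_sq_div_mul_one_sub_log_sq hg hIcc
  have hq : ContinuousOn q (Icc ε 1) :=
    ((continuousOn_const.mul hg).mul hG).div
      (continuousOn_const.sub (continuousOn_log.mono fun r hr => (hpos r hr).ne'))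
      fun r hr => (hw r hr).ne'
  have hv : ContinuousOn (fun r => r * G r ^ 2) (Icc ε 1) := continuousOn_id.mul (hG.pow 2)
  rw [← uIcc_of_le hε1] at hu hq hv
  have hftc : ∫ r in ε..1, (q r + u r) = -(g ε ^ 2 / (1 - log ε)) := by
    rw [intervalIntegral.integral_eq_sub_of_hasDerivAt (f := fun r => g r ^ 2 / (1 - log r))
      (f' := fun r => q r + u r) (fun r hr => ?_) ((hq.add hu).intervalIntegrable), hg1]
    · simp
    rw [uIcc_of_le hε1] at hr
    have hlog : HasDerivAt (fun r => 1 - log r) (-r⁻¹) r := by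
      simpa using (hasDerivAt_log (hpos r hr).ne').const_sub 1
    have hsq : HasDerivAt (fun r => g r ^ 2) (2 * g r * G r) r := by
      simpa [mul_comm, mul_assoc, mul_left_comm] using (hd r hr).fun_pow 2
    refine (hsq.div hlog (hw r hr).ne').congr_deriv ?_
    have := (hw r hr).ne'
    have := (hpos r hr).ne'
    simp only [q, u]
    field_simp
    ring
  have hpt : ∀ r ∈ Icc ε 1, u r / 2 - 2 * (r * G r ^ 2) ≤ q r + u r := fun r hr => by
    have := (hw r hr).ne'
    have := (hpos r hr).ne'
    have hsq : u r / 2 + q r + 2 * (r * G r ^ 2)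
        = (g r + 2 * r * (1 - log r) * G r) ^ 2 / (2 * r * (1 - log r) ^ 2) := by
      simp only [q, u]
      field_simp
      ring
    have : 0 ≤ (g r + 2 * r * (1 - log r) * G r) ^ 2 / (2 * r * (1 - log r) ^ 2) := by
      have := hpos r hr; positivity
    linarith
  have hmono : ∫ r in ε..1, (u r / 2 - 2 * (r * G r ^ 2)) ≤ ∫ r in ε..1, (q r + u r) :=
    intervalIntegral.integral_mono_on hε1
      (((hu.intervalIntegrable (μ := volume)).div_const 2).sub (hv.intervalIntegrable.const_mul 2))
      (hq.add hu).intervalIntegrable hpt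
  have hε0 : 0 ≤ g ε ^ 2 / (1 - log ε) := by have := hw ε ⟨le_rfl, hε1⟩; positivity
  rw [hftc, intervalIntegral.integral_sub (hu.intervalIntegrable.div_const 2)
    (hv.intervalIntegrable.const_mul 2), intervalIntegral.integral_div,
    intervalIntegral.integral_const_mul] at hmono
  linarith

theorem iUnion_Ioc_one_div_nat_add_one :
    ⋃ n : ℕ, Ioc (1 / ((n : ℝ) + 1)) 1 = Ioc 0 1 := by
  refine (iUnion_subset fun n => Ioc_subset_Ioc_left (by positivity)).antisymm fun r hr => ?_
  obtain ⟨n, hn⟩ := exists_nat_one_div_lt hr.1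
  exact mem_iUnion.2 ⟨n, hn, hr.2⟩

theorem lintegral_sq_div_mul_one_sub_log_sq_le {g G : ℝ → ℝ}
    (hd : ∀ r ∈ Ioc 0 1, HasDerivAt g (G r) r) (hG : ContinuousOn G (Ioc 0 1)) (hg1 : g 1 = 0) :
    ∫⁻ r in Ioc 0 1, ENNReal.ofReal (g r ^ 2 / (r * (1 - log r) ^ 2))
      ≤ 4 * ∫⁻ r in Ioc 0 1, ENNReal.ofReal (r * G r ^ 2) := by
  have hmono : Monotone fun n : ℕ => Ioc (1 / ((n : ℝ) + 1)) 1 := fun m n hmn =>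
    Ioc_subset_Ioc_left (one_div_le_one_div_of_le (by positivity) (by gcongr))
  conv_lhs =>
    rw [← iUnion_Ioc_one_div_nat_add_one, setLIntegral_iUnion_of_directed _ hmono.directed_le]
  refine iSup_le fun n => ?_
  set ε : ℝ := 1 / ((n : ℝ) + 1)
  have hε : 0 < ε := by positivity
  have hε1 : ε ≤ 1 := div_le_one_of_le₀ (by linarith [n.cast_nonneg (α := ℝ)]) (by positivity)
  have hIcc : Icc ε 1 ⊆ Ioc 0 1 := fun r hr => ⟨hε.trans_le hr.1, hr.2⟩
  have hIoc : Ioc ε 1 ⊆ Ioc 0 1 := Ioc_subset_Icc_self.trans hIcc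
  have hg : ContinuousOn g (Icc ε 1) := fun r hr =>
    (hd r (hIcc hr)).continuousAt.continuousWithinAt
  have hu : IntegrableOn (fun r => g r ^ 2 / (r * (1 - log r) ^ 2)) (Ioc ε 1) :=
    (continuousOn_sq_div_mul_one_sub_log_sq hg hIcc).integrableOn_Icc.mono_set Ioc_subset_Icc_self
  have hv : IntegrableOn (fun r => r * G r ^ 2) (Ioc ε 1) :=
    (continuousOn_id.mul ((hG.mono hIcc).pow 2)).integrableOn_Icc.mono_set Ioc_subset_Icc_self
  have hint := integral_sq_div_mul_one_sub_log_sq_le hε hε1 (fun r hr => hd r (hIcc hr))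
    (hG.mono hIcc) hg1
  rw [intervalIntegral.integral_of_le hε1, intervalIntegral.integral_of_le hε1] at hint
  have hnonneg : ∀ r ∈ Ioc ε 1, 0 ≤ g r ^ 2 / (r * (1 - log r) ^ 2) ∧ 0 ≤ r * G r ^ 2 :=
    fun r hr => by have := (hIoc hr).1; constructor <;> positivity
  calc ∫⁻ r in Ioc ε 1, ENNReal.ofReal (g r ^ 2 / (r * (1 - log r) ^ 2))
      = ENNReal.ofReal (∫ r in Ioc ε 1, g r ^ 2 / (r * (1 - log r) ^ 2)) :=
        (ofReal_integral_eq_lintegral_ofReal hu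
          ((ae_restrict_iff' measurableSet_Ioc).2 (.of_forall fun r hr => (hnonneg r hr).1))).symm
    _ ≤ ENNReal.ofReal (4 * ∫ r in Ioc ε 1, r * G r ^ 2) := ENNReal.ofReal_le_ofReal hint
    _ = 4 * ∫⁻ r in Ioc ε 1, ENNReal.ofReal (r * G r ^ 2) := by
        rw [ENNReal.ofReal_mul zero_le_four, ofReal_integral_eq_lintegral_ofReal hv
          ((ae_restrict_iff' measurableSet_Ioc).2 (.of_forall fun r hr => (hnonneg r hr).2)),
          ENNReal.ofReal_ofNat]
    _ ≤ 4 * ∫⁻ r in Ioc 0 1, ENNReal.ofReal (r * G r ^ 2) := by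
        gcongr

noncomputable def hardyWeight (y : ℝ × ℝ) : ℝ :=
  (y.1 ^ 2 + y.2 ^ 2) * log (exp 1 / √(y.1 ^ 2 + y.2 ^ 2)) ^ 2

theorem hardyWeight_nonneg (y : ℝ × ℝ) : 0 ≤ hardyWeight y := by
  unfold hardyWeight
  positivity

theorem sq_add_sq_polarCoord_symm (p : ℝ × ℝ) :
    (polarCoord.symm p).1 ^ 2 + (polarCoord.symm p).2 ^ 2 = p.1 ^ 2 := by
  simp only [polarCoord_symm_apply]
  linear_combination p.1 ^ 2 * sin_sq_add_cos_sq p.2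

theorem hardyWeight_polarCoord_symm {r : ℝ} (hr : 0 < r) (θ : ℝ) :
    hardyWeight (polarCoord.symm (r, θ)) = r ^ 2 * (1 - log r) ^ 2 := by
  rw [hardyWeight, sq_add_sq_polarCoord_symm, sqrt_sq hr.le, log_div (exp_ne_zero 1) hr.ne',
    log_exp]

theorem measurable_hardyWeight : Measurable hardyWeight := by
  unfold hardyWeight
  fun_prop

theorem sq_mul_cos_add_mul_sin_le (a b θ : ℝ) : (a * cos θ + b * sin θ) ^ 2 ≤ a ^ 2 + b ^ 2 := by
  nlinarith [sin_sq_add_cos_sq θ, sq_nonneg (a * sin θ - b * cos θ)]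

theorem lintegral_ray_sq_div_hardyWeight_le {f : ℝ × ℝ → ℝ} {f' : ℝ × ℝ → ℝ × ℝ →L[ℝ] ℝ}
    (hf : ∀ y, HasFDerivAt f (f' y) y) (hf' : Continuous f')
    (hf0 : ∀ y, 1 ≤ y.1 ^ 2 + y.2 ^ 2 → f y = 0) (θ : ℝ) :
    ∫⁻ r in Ioi 0, ENNReal.ofReal r •
        ENNReal.ofReal (f (polarCoord.symm (r, θ)) ^ 2 / hardyWeight (polarCoord.symm (r, θ)))
      ≤ 4 * ∫⁻ r in Ioi 0, ENNReal.ofReal r • ENNReal.ofReal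
        (f' (polarCoord.symm (r, θ)) (1, 0) ^ 2 + f' (polarCoord.symm (r, θ)) (0, 1) ^ 2) := by
  have hc : ∀ r, HasDerivAt (fun r => polarCoord.symm (r, θ)) (cos θ, sin θ) r := fun r => by
    simpa using ((hasDerivAt_id r).mul_const (cos θ)).prodMk ((hasDerivAt_id r).mul_const (sin θ))
  set c : ℝ → ℝ × ℝ := fun r => polarCoord.symm (r, θ)
  have hc_cont : Continuous c := continuous_iff_continuousAt.2 fun r => (hc r).continuousAt
  have hd : ∀ r, HasDerivAt (fun r => f (c r)) (f' (c r) (cos θ, sin θ)) r := fun r =>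
    (hf (c r)).comp_hasDerivAt r (hc r)
  have hg0 : ∀ r, 1 ≤ r → f (c r) = 0 := fun r hr =>
    hf0 _ (by rw [sq_add_sq_polarCoord_symm]; nlinarith)
  have hG : ∀ r, f' (c r) (cos θ, sin θ) = f' (c r) (1, 0) * cos θ + f' (c r) (0, 1) * sin θ :=
    fun r => by
      rw [show ((cos θ, sin θ) : ℝ × ℝ) = cos θ • (1, 0) + sin θ • (0, 1) by simp, map_add,
        map_smul, map_smul, smul_eq_mul, smul_eq_mul, mul_comm, mul_comm (sin θ)]
  have hray := lintegral_sq_div_mul_one_sub_log_sq_le (fun r _ => hd r)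
    ((hf'.comp hc_cont).clm_apply continuous_const).continuousOn (hg0 1 le_rfl)
  calc ∫⁻ r in Ioi 0, ENNReal.ofReal r • ENNReal.ofReal (f (c r) ^ 2 / hardyWeight (c r))
      = ∫⁻ r in Ioc 0 1, ENNReal.ofReal (f (c r) ^ 2 / (r * (1 - log r) ^ 2)) := by
        rw [← Ioc_union_Ioi_eq_Ioi zero_le_one, lintegral_union measurableSet_Ioi
          (Ioc_disjoint_Ioi le_rfl), setLIntegral_congr_fun measurableSet_Ioi
          (g := fun _ => 0) fun r hr => by simp [hg0 r hr.le], lintegral_zero, add_zero]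
        refine setLIntegral_congr_fun measurableSet_Ioc fun r hr => ?_
        have := hr.1.ne'
        have := (one_pos.trans_le (one_le_one_sub_log hr)).ne'
        rw [hardyWeight_polarCoord_symm hr.1, smul_eq_mul, ← ENNReal.ofReal_mul hr.1.le]
        field_simp
    _ ≤ 4 * ∫⁻ r in Ioc 0 1, ENNReal.ofReal (r * f' (c r) (cos θ, sin θ) ^ 2) := hray
    _ ≤ 4 * ∫⁻ r in Ioi 0, ENNReal.ofReal r • ENNReal.ofReal
        (f' (c r) (1, 0) ^ 2 + f' (c r) (0, 1) ^ 2) := by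
      gcongr 4 * ?_
      refine (lintegral_mono_set Ioc_subset_Ioi_self).trans
        (setLIntegral_mono' measurableSet_Ioi fun r hr => ?_)
      rw [smul_eq_mul, ← ENNReal.ofReal_mul hr.le, hG]
      exact ENNReal.ofReal_le_ofReal
        (mul_le_mul_of_nonneg_left (sq_mul_cos_add_mul_sin_le _ _ _) hr.le)

theorem lintegral_eq_iterated_lintegral_polarCoord {F : ℝ × ℝ → ENNReal} (hF : Measurable F) :
    ∫⁻ y, F y
      = ∫⁻ θ in Ioo (-π) π, ∫⁻ r in Ioi 0, ENNReal.ofReal r • F (polarCoord.symm (r, θ)) := by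
  rw [← lintegral_comp_polarCoord_symm, polarCoord_target, Measure.volume_eq_prod,
    ← Measure.prod_restrict, lintegral_prod_symm]
  exact (measurable_fst.ennreal_ofReal.smul
    (hF.comp continuous_polarCoord_symm.measurable)).aemeasurable

theorem lintegral_sq_div_hardyWeight_le {f : ℝ × ℝ → ℝ} {f' : ℝ × ℝ → ℝ × ℝ →L[ℝ] ℝ}
    (hf : ∀ y, HasFDerivAt f (f' y) y) (hf' : Continuous f')
    (hf0 : ∀ y, 1 ≤ y.1 ^ 2 + y.2 ^ 2 → f y = 0) :
    ∫⁻ y, ENNReal.ofReal (f y ^ 2 / hardyWeight y)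
      ≤ 4 * ∫⁻ y, ENNReal.ofReal (f' y (1, 0) ^ 2 + f' y (0, 1) ^ 2) := by
  have hf_cont : Continuous f := continuous_iff_continuousAt.2 fun y => (hf y).continuousAt
  have hmeas : Measurable fun y => f y ^ 2 / hardyWeight y :=
    (hf_cont.pow 2).measurable.div measurable_hardyWeight
  rw [lintegral_eq_iterated_lintegral_polarCoord hmeas.ennreal_ofReal,
    lintegral_eq_iterated_lintegral_polarCoord (by fun_prop),
    ← lintegral_const_mul' _ _ ENNReal.ofNat_ne_top]
  exact lintegral_mono fun θ => lintegral_ray_sq_div_hardyWeight_le hf hf' hf0 θ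

theorem lintegral_fin_three {F : (Fin 3 → ℝ) → ENNReal} (hF : Measurable F) :
    ∫⁻ x, F x = ∫⁻ t, ∫⁻ y : ℝ × ℝ, F ![y.1, y.2, t] := by
  set e := MeasurableEquiv.piFinSuccAbove (fun _ : Fin 3 => ℝ) 2
  have he : MeasurePreserving e.symm := (volume_preserving_piFinSuccAbove _ 2).symm e
  rw [← he.lintegral_comp_emb e.symm.measurableEmbedding, Measure.volume_eq_prod,
    lintegral_prod (fun z => F (e.symm z)) (hF.comp e.symm.measurable).aemeasurable]
  refine lintegral_congr fun t => ?_
  rw [← ((volume_preserving_finTwoArrow ℝ).symm _).lintegral_comp_emb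
    MeasurableEquiv.finTwoArrow.symm.measurableEmbedding]
  congr! 3 with y
  funext i
  fin_cases i <;> rfl

noncomputable def horizontalSliceCLM : ℝ × ℝ →L[ℝ] (Fin 3 → ℝ) :=
  ContinuousLinearMap.pi ![ContinuousLinearMap.fst ℝ ℝ ℝ, ContinuousLinearMap.snd ℝ ℝ ℝ, 0]

theorem hasFDerivAt_horizontalSlice (t : ℝ) (y : ℝ × ℝ) :
    HasFDerivAt (fun y : ℝ × ℝ => ![y.1, y.2, t]) horizontalSliceCLM y := by
  rw [hasFDerivAt_pi']
  intro i
  fin_cases i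
  · exact hasFDerivAt_fst
  · exact hasFDerivAt_snd
  · exact hasFDerivAt_const t y

theorem lintegral_slice_sq_div_hardyWeight_le {f : (Fin 3 → ℝ) → ℝ} (hf : ContDiff ℝ 1 f)
    (hf0 : ∀ x, 1 ≤ x 0 ^ 2 + x 1 ^ 2 → f x = 0) (t : ℝ) :
    ∫⁻ y : ℝ × ℝ, ENNReal.ofReal (f ![y.1, y.2, t] ^ 2 / hardyWeight y)
      ≤ 4 * ∫⁻ y : ℝ × ℝ, ENNReal.ofReal (fderiv ℝ f ![y.1, y.2, t] (Pi.single 0 1) ^ 2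
          + fderiv ℝ f ![y.1, y.2, t] (Pi.single 1 1) ^ 2) := by
  have hslice := hasFDerivAt_horizontalSlice t
  have hL₀ : horizontalSliceCLM (1, 0) = Pi.single 0 1 := by
    ext i; fin_cases i <;> simp [horizontalSliceCLM]
  have hL₁ : horizontalSliceCLM (0, 1) = Pi.single 1 1 := by
    ext i; fin_cases i <;> simp [horizontalSliceCLM]
  have h := lintegral_sq_div_hardyWeight_le
    (f' := fun y => (fderiv ℝ f ![y.1, y.2, t]).comp horizontalSliceCLM)
    (fun y => ((hf.differentiable one_ne_zero) _).hasFDerivAt.comp y (hslice y))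
    (((hf.continuous_fderiv one_ne_zero).comp
      (continuous_iff_continuousAt.2 fun y => (hslice y).continuousAt)).clm_comp continuous_const)
    (fun y hy => hf0 _ hy)
  simpa only [Function.comp_apply, ContinuousLinearMap.comp_apply, hL₀, hL₁] using h

theorem lintegral_fin_three_sq_div_hardyWeight_le {f : (Fin 3 → ℝ) → ℝ} (hf : ContDiff ℝ 1 f)
    (hf0 : ∀ x, 1 ≤ x 0 ^ 2 + x 1 ^ 2 → f x = 0) :
    ∫⁻ x, ENNReal.ofReal (f x ^ 2 / hardyWeight (x 0, x 1))
      ≤ 4 * ∫⁻ x, ENNReal.ofReal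
        (fderiv ℝ f x (Pi.single 0 1) ^ 2 + fderiv ℝ f x (Pi.single 1 1) ^ 2) := by
  have hfd : Continuous (fderiv ℝ f) := hf.continuous_fderiv one_ne_zero
  have hmeas : Measurable fun x : Fin 3 → ℝ => f x ^ 2 / hardyWeight (x 0, x 1) :=
    (hf.continuous.pow 2).measurable.div (measurable_hardyWeight.comp (by fun_prop))
  rw [lintegral_fin_three hmeas.ennreal_ofReal, lintegral_fin_three (by fun_prop),
    ← lintegral_const_mul' _ _ ENNReal.ofNat_ne_top]
  exact lintegral_mono fun t => lintegral_slice_sq_div_hardyWeight_le hf hf0 t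

theorem integral_le_of_lintegral_ofReal_le {α : Type*} [MeasurableSpace α] {μ : Measure α}
    {f : α → ℝ} {b : ℝ} (hf : 0 ≤ᵐ[μ] f) (hb : 0 ≤ b)
    (h : ∫⁻ x, ENNReal.ofReal (f x) ∂μ ≤ ENNReal.ofReal b) : ∫ x, f x ∂μ ≤ b := by
  refine (Real.le_norm_self _).trans ((norm_integral_le_lintegral_norm _).trans ?_)
  rw [lintegral_congr_ae (hf.mono fun x hx => by rw [Real.norm_of_nonneg hx])]
  exact ENNReal.toReal_le_of_le_ofReal hb h

/-- Leray/Hardy type inequality with logarithmic weight on the unit cylinder: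
for `f ∈ C¹₀(C)`,
`∫_C |f|²/(|x'|² ln²(e/|x'|)) dx ≤ 4 ∫_C |∇_{x'} f|² dx`. -/
theorem stmt0 (f : (Fin 3 → ℝ) → ℝ)
    (hf : ContDiff ℝ 1 f) (hsupp : HasCompactSupport f)
    (hsub : tsupport f ⊆ cylC) :
    (∫ x in cylC, (f x)^2 /
        (((x 0)^2 + (x 1)^2) *
          (Real.log (Real.exp 1 / Real.sqrt ((x 0)^2 + (x 1)^2)))^2))
      ≤ 4 * ∫ x in cylC,
          ((fderiv ℝ f x (Pi.single 0 1))^2 + (fderiv ℝ f x (Pi.single 1 1))^2) := by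
  change ∫ x in cylC, f x ^ 2 / hardyWeight (x 0, x 1) ≤ _
  set D := fun x => fderiv ℝ f x (Pi.single 0 1) ^ 2 + fderiv ℝ f x (Pi.single 1 1) ^ 2
  have hfd : Continuous (fderiv ℝ f) := hf.continuous_fderiv one_ne_zero
  have hD_int : Integrable D := (by fun_prop : Continuous D).integrable_of_hasCompactSupport
    ((hsupp.fderiv (𝕜 := ℝ)).mono' fun x hx => subset_tsupport _ fun h => hx (by simp [D, h]))
  have hD0 : ∀ x ∉ cylC, D x = 0 := fun x hx => by
    simp [D, image_eq_zero_of_notMem_tsupport fun h => hx (hsub (tsupport_fderiv_subset ℝ h))]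
  have hf0 : ∀ x, 1 ≤ x 0 ^ 2 + x 1 ^ 2 → f x = 0 := fun x hx =>
    image_eq_zero_of_notMem_tsupport fun h => (hsub h).1.not_ge hx
  rw [setIntegral_eq_integral_of_forall_compl_eq_zero hD0]
  refine integral_le_of_lintegral_ofReal_le
    (.of_forall fun x => div_nonneg (sq_nonneg _) (hardyWeight_nonneg _))
    (mul_nonneg zero_le_four (integral_nonneg fun x => by positivity)) ?_
  rw [ENNReal.ofReal_mul zero_le_four, ENNReal.ofReal_ofNat,
    ofReal_integral_eq_lintegral_ofReal hD_int (.of_forall fun x => by positivity)]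
  exact (setLIntegral_le_lintegral _ _).trans (lintegral_fin_three_sq_div_hardyWeight_le hf hf0)
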